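/- arXiv:1809.09505 — 2 statements merged into one kernel-verified Lean document; each statement's English description precedes it below -/
import Mathlib

section
/- For all degrees of freedom h ≥ 2, the Kullback–Leibler divergence from the standard Gaussian N(0,1) to the standard Student t-distribution with h degrees of freedom satisfies KL(N(0,1) ‖ T_h) ≤ log[Γ(h/2)·h^{1/2}/Γ((h+1)/2)] − (1/2)log(2e) + ((h+1)/2)·log(1 + 1/h). -/
/-!
Both measures have everywhere positive densities, so `log dN(0,1)/dT_h` is the difference of
the log-densities: a constant, plus `(1 - θ²)/2`, plus `(h+1)/2 · log (1 + θ²/h)`. Since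
`E[Θ²] = 1`, the middle term integrates to zero, and the divergence equals the right-hand side
with `log (1 + 1/h)` replaced by `E[log (1 + Θ²/h)]`. Jensen's inequality for the concave
logarithm bounds the latter by `log (1 + E[Θ²]/h) = log (1 + 1/h)`.
-/

open MeasureTheory ProbabilityTheory Real
open scoped NNReal

/-- Kullback–Leibler divergence `∫ log (dμ/dν) dμ`. -/
noncomputable def klDiv (μ ν : Measure ℝ) : ℝ :=
  ∫ x, Real.log (μ.rnDeriv ν x).toReal ∂μ

/-- The standard Student t-distribution with `h` degrees of freedom, as a measure on `ℝ`. -/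
noncomputable def studentT (h : ℝ) : Measure ℝ :=
  volume.withDensity fun θ => ENNReal.ofReal
    (Real.Gamma ((h + 1) / 2) / (Real.sqrt (h * Real.pi) * Real.Gamma (h / 2)) *
      (1 + θ ^ 2 / h) ^ (-((h + 1) / 2)))

section Jensen

variable {α : Type*} [MeasurableSpace α] {μ : Measure α}

lemma integrable_log_one_add {g : α → ℝ} (hg : Integrable g μ) (hg0 : 0 ≤ᵐ[μ] g) :
    Integrable (fun x => log (1 + g x)) μ := by
  refine hg.mono'
    (measurable_log.comp_aemeasurable (hg.aemeasurable.const_add 1)).aestronglyMeasurable ?_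
  filter_upwards [hg0] with x (hx : 0 ≤ g x)
  rw [norm_of_nonneg (log_nonneg (by linarith))]
  linarith [log_le_sub_one_of_pos (by linarith : 0 < 1 + g x)]

lemma integral_log_one_add_le [IsProbabilityMeasure μ] {g : α → ℝ} (hg : Integrable g μ)
    (hg0 : 0 ≤ᵐ[μ] g) : ∫ x, log (1 + g x) ∂μ ≤ log (1 + ∫ x, g x ∂μ) := by
  have hconcave : ConcaveOn ℝ (Set.Ici 1) log :=
    strictConcaveOn_log_Ioi.concaveOn.subset (Set.Ici_subset_Ioi.mpr one_pos) (convex_Ici 1)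
  have hcont : ContinuousOn log (Set.Ici 1) :=
    continuousOn_log.mono fun t ht => (zero_lt_one.trans_le ht).ne'
  have := hconcave.le_map_integral (f := fun x => 1 + g x) hcont isClosed_Ici
    (by filter_upwards [hg0] with x hx; simpa using hx)
    ((integrable_const 1).add hg) (integrable_log_one_add hg hg0)
  rwa [integral_add (integrable_const 1) hg, integral_const, probReal_univ, one_smul] at this

end Jensen

lemma integrable_sq_gaussianReal (μ : ℝ) (v : ℝ≥0) :
    Integrable (fun x => x ^ 2) (gaussianReal μ v) :=
  (memLp_id_gaussianReal 2).integrable_sq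

lemma integral_sq_gaussianReal (μ : ℝ) (v : ℝ≥0) :
    ∫ x, x ^ 2 ∂gaussianReal μ v = μ ^ 2 + v := by
  have := variance_eq_sub (memLp_id_gaussianReal (μ := μ) (v := v) 2)
  simp only [variance_id_gaussianReal, Pi.pow_apply, id_eq, integral_id_gaussianReal] at this
  linarith

lemma log_gaussianPDFReal (μ : ℝ) {v : ℝ≥0} (hv : v ≠ 0) (x : ℝ) :
    log (gaussianPDFReal μ v x) = -log (2 * π * v) / 2 - (x - μ) ^ 2 / (2 * v) := by
  have hv : (0 : ℝ) < v := by positivity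
  rw [gaussianPDFReal, log_mul (by positivity) (exp_pos _).ne', log_inv,
    log_sqrt (by positivity), log_exp]
  ring

section StudentT

noncomputable def studentTPDFReal (h θ : ℝ) : ℝ :=
  Gamma ((h + 1) / 2) / (sqrt (h * π) * Gamma (h / 2)) * (1 + θ ^ 2 / h) ^ (-((h + 1) / 2))

lemma studentT_eq_withDensity (h : ℝ) :
    studentT h = volume.withDensity fun θ => ENNReal.ofReal (studentTPDFReal h θ) := rfl

lemma measurable_studentTPDFReal (h : ℝ) : Measurable (studentTPDFReal h) := by
  unfold studentTPDFReal
  fun_prop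

variable {h : ℝ}

lemma studentTPDFReal_pos (hh : 0 < h) (θ : ℝ) : 0 < studentTPDFReal h θ := by
  have := Gamma_pos_of_pos (by positivity : 0 < (h + 1) / 2)
  have := Gamma_pos_of_pos (by positivity : 0 < h / 2)
  unfold studentTPDFReal
  positivity

lemma log_studentTPDFReal (hh : 0 < h) (θ : ℝ) :
    log (studentTPDFReal h θ) = -log (Gamma (h / 2) * sqrt h / Gamma ((h + 1) / 2))
      - log π / 2 - (h + 1) / 2 * log (1 + θ ^ 2 / h) := by
  have hΓ₁ := Gamma_pos_of_pos (by positivity : 0 < (h + 1) / 2)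
  have hΓ₂ := Gamma_pos_of_pos (by positivity : 0 < h / 2)
  have hsh := sqrt_pos.mpr hh
  have hsπ := sqrt_pos.mpr pi_pos
  rw [studentTPDFReal, log_mul (by positivity) (by positivity), log_rpow (by positivity),
    sqrt_mul hh.le, log_div hΓ₁.ne' (by positivity), log_mul (by positivity) hΓ₂.ne',
    log_mul hsh.ne' hsπ.ne', log_div (by positivity) hΓ₁.ne', log_mul hΓ₂.ne' hsh.ne',
    log_sqrt pi_pos.le]
  ring

lemma rnDeriv_gaussianReal_studentT (hh : 0 < h) (μ : ℝ) {v : ℝ≥0} (hv : v ≠ 0) :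
    ∂(gaussianReal μ v)/∂(studentT h) =ᵐ[gaussianReal μ v]
      fun x => ENNReal.ofReal (gaussianPDFReal μ v x / studentTPDFReal h x) := by
  have hright := Measure.rnDeriv_withDensity_right (gaussianReal μ v) volume
    (measurable_studentTPDFReal h).ennreal_ofReal.aemeasurable
    (ae_of_all _ fun x => (ENNReal.ofReal_pos.mpr (studentTPDFReal_pos hh x)).ne')
    (ae_of_all _ fun _ => ENNReal.ofReal_ne_top)
  refine (gaussianReal_absolutelyContinuous μ hv).ae_le ?_
  filter_upwards [hright, rnDeriv_gaussianReal μ v] with x hx hpdf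
  rw [studentT_eq_withDensity, hx, hpdf, gaussianPDF,
    ENNReal.ofReal_div_of_pos (studentTPDFReal_pos hh x), div_eq_mul_inv, mul_comm]

lemma log_gaussianPDFReal_div_studentTPDFReal (hh : 0 < h) (x : ℝ) :
    log (gaussianPDFReal 0 1 x / studentTPDFReal h x) =
      log (Gamma (h / 2) * sqrt h / Gamma ((h + 1) / 2)) - 1 / 2 * log (2 * exp 1)
        + (h + 1) / 2 * log (1 + x ^ 2 / h) + (1 - x ^ 2) / 2 := by
  rw [log_div (gaussianPDFReal_pos 0 1 x one_ne_zero).ne' (studentTPDFReal_pos hh x).ne',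
    log_gaussianPDFReal 0 one_ne_zero, log_studentTPDFReal hh, NNReal.coe_one, mul_one,
    log_mul two_ne_zero (exp_pos 1).ne', log_exp, log_mul two_ne_zero pi_pos.ne']
  ring

lemma klDiv_gaussianReal_studentT (hh : 0 < h) :
    klDiv (gaussianReal 0 1) (studentT h) =
      log (Gamma (h / 2) * sqrt h / Gamma ((h + 1) / 2)) - 1 / 2 * log (2 * exp 1)
        + (h + 1) / 2 * ∫ x, log (1 + x ^ 2 / h) ∂gaussianReal 0 1 := by
  have hlog : Integrable (fun x => log (1 + x ^ 2 / h)) (gaussianReal 0 1) :=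
    integrable_log_one_add ((integrable_sq_gaussianReal 0 1).div_const h)
      (ae_of_all _ fun x => by positivity)
  have hcentred : Integrable (fun x => (1 - x ^ 2) / 2) (gaussianReal 0 1) :=
    ((integrable_const 1).sub (integrable_sq_gaussianReal 0 1)).div_const 2
  have hcentred_zero : ∫ x, (1 - x ^ 2) / 2 ∂gaussianReal 0 1 = 0 := by
    rw [integral_div, integral_sub (integrable_const 1) (integrable_sq_gaussianReal 0 1),
      integral_sq_gaussianReal, integral_const, probReal_univ]
    norm_num
  calc klDiv (gaussianReal 0 1) (studentT h)
      = ∫ x, log (gaussianPDFReal 0 1 x / studentTPDFReal h x) ∂gaussianReal 0 1 := by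
        refine integral_congr_ae ?_
        filter_upwards [rnDeriv_gaussianReal_studentT hh 0 one_ne_zero] with x hx
        rw [hx, ENNReal.toReal_ofReal
          (div_nonneg (gaussianPDFReal_nonneg 0 1 x) (studentTPDFReal_pos hh x).le)]
    _ = _ := by
        simp_rw [log_gaussianPDFReal_div_studentTPDFReal hh]
        rw [integral_add ((integrable_const _).fun_add (hlog.const_mul _)) hcentred,
          integral_add (integrable_const _) (hlog.const_mul _), hcentred_zero, integral_const,
          probReal_univ, one_smul, integral_const_mul, add_zero]

end StudentT

theorem stmt3 (h : ℝ) (hh : 2 ≤ h) :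
    klDiv (gaussianReal 0 1) (studentT h) ≤
      Real.log (Real.Gamma (h / 2) * Real.sqrt h / Real.Gamma ((h + 1) / 2)) -
        (1 / 2) * Real.log (2 * Real.exp 1) + ((h + 1) / 2) * Real.log (1 + 1 / h) := by
  have hh0 : 0 < h := by linarith
  have hjensen : ∫ x, log (1 + x ^ 2 / h) ∂gaussianReal 0 1 ≤ log (1 + 1 / h) :=
    calc ∫ x, log (1 + x ^ 2 / h) ∂gaussianReal 0 1
        ≤ log (1 + ∫ x, x ^ 2 / h ∂gaussianReal 0 1) :=
          integral_log_one_add_le ((integrable_sq_gaussianReal 0 1).div_const h)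
            (ae_of_all _ fun x => by positivity)
      _ = log (1 + 1 / h) := by rw [integral_div, integral_sq_gaussianReal]; norm_num
  rw [klDiv_gaussianReal_studentT hh0]
  gcongr
end

section
/- If W₂(η, η̂) ≤ ε for probability measures η, η̂ on ℝ with finite second moments, then the standard deviations satisfy |σ_η − σ_{η̂}| ≤ (1/2)(√2 + √6)·ε. -/
open MeasureTheory ProbabilityTheory Real

/-- The `p`-Wasserstein distance: infimum over couplings of
`(∫ ‖θ - θ̂‖^p dγ)^(1/p)`. -/
noncomputable def wassersteinDist {E : Type*} [NormedAddCommGroup E] [MeasurableSpace E]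
    (p : ℝ) (μ ν : Measure E) : ℝ :=
  sInf {w | ∃ γ : Measure (E × E), γ.map Prod.fst = μ ∧ γ.map Prod.snd = ν ∧
    w = (∫ q, ‖q.1 - q.2‖ ^ p ∂γ) ^ (1 / p)}

/-- Mean of a measure on `ℝ`. -/
noncomputable def mMean (μ : Measure ℝ) : ℝ := ∫ x, x ∂μ

/-- Variance of a measure on `ℝ`. -/
noncomputable def mVar (μ : Measure ℝ) : ℝ := ∫ x, (x - mMean μ) ^ 2 ∂μ

/-- Standard deviation of a measure on `ℝ`. -/
noncomputable def mStd (μ : Measure ℝ) : ℝ := Real.sqrt (mVar μ)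

/-!
The standard deviation `X ↦ √Var[X]` is a seminorm on `L²`: by Cauchy–Schwarz for the
covariance, `(σ_X - σ_Y)² ≤ Var[X] - 2 cov[X, Y] + Var[Y] = Var[X - Y] ≤ 𝔼[(X - Y)²]`.
Applied to the coordinates of an arbitrary coupling of `η` and `η̂`, this gives the sharp bound
`|σ_η - σ_η̂| ≤ W₂(η, η̂)`, and the constant `(√2 + √6) / 2` exceeds `1`.
-/

section CauchySchwarz

variable {Ω : Type*} [MeasurableSpace Ω] {μ : Measure Ω}

lemma integral_mul_le_sqrt_mul_sqrt {f g : Ω → ℝ} (hf : MemLp f 2 μ)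
    (hg : MemLp g 2 μ) :
    ∫ ω, f ω * g ω ∂μ ≤ √(∫ ω, f ω ^ 2 ∂μ) * √(∫ ω, g ω ^ 2 ∂μ) := by
  have hfg : Integrable (fun ω => f ω * g ω) μ := hf.integrable_mul hg
  have sqrt_eq (h : Ω → ℝ) :
      √(∫ ω, h ω ^ 2 ∂μ) = (∫ ω, |h ω| ^ (2 : ℝ) ∂μ) ^ (1 / (2 : ℝ)) := by
    simp only [rpow_two, sq_abs, sqrt_eq_rpow]
  calc ∫ ω, f ω * g ω ∂μ ≤ ∫ ω, |f ω| * |g ω| ∂μ := by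
        refine integral_mono hfg (by simpa only [abs_mul] using hfg.abs) fun ω => ?_
        simpa only [abs_mul] using le_abs_self (f ω * g ω)
    _ ≤ (∫ ω, |f ω| ^ (2 : ℝ) ∂μ) ^ (1 / (2 : ℝ)) *
          (∫ ω, |g ω| ^ (2 : ℝ) ∂μ) ^ (1 / (2 : ℝ)) :=
        integral_mul_le_Lp_mul_Lq_of_nonneg HolderConjugate.two_two
          (.of_forall fun _ => abs_nonneg _) (.of_forall fun _ => abs_nonneg _)
          (by rw [ENNReal.ofReal_ofNat]; exact hf.abs)
          (by rw [ENNReal.ofReal_ofNat]; exact hg.abs)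
    _ = √(∫ ω, f ω ^ 2 ∂μ) * √(∫ ω, g ω ^ 2 ∂μ) := by rw [sqrt_eq f, sqrt_eq g]

variable [IsFiniteMeasure μ] {X Y : Ω → ℝ}

lemma covariance_le_sqrt_variance_mul (hX : MemLp X 2 μ) (hY : MemLp Y 2 μ) :
    cov[X, Y; μ] ≤ √Var[X; μ] * √Var[Y; μ] := by
  rw [covariance, variance_eq_integral hX.aemeasurable, variance_eq_integral hY.aemeasurable]
  exact integral_mul_le_sqrt_mul_sqrt (hX.sub (memLp_const _)) (hY.sub (memLp_const _))

lemma abs_sqrt_variance_sub_le (hX : MemLp X 2 μ) (hY : MemLp Y 2 μ) :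
    |√Var[X; μ] - √Var[Y; μ]| ≤ √Var[X - Y; μ] := by
  rw [← sqrt_sq_eq_abs, variance_sub hX hY]
  refine sqrt_le_sqrt ?_
  have hcov := covariance_le_sqrt_variance_mul hX hY
  have hVX := sq_sqrt (variance_nonneg X μ)
  have hVY := sq_sqrt (variance_nonneg Y μ)
  nlinarith

end CauchySchwarz

lemma mVar_eq_variance_id (μ : Measure ℝ) : mVar μ = Var[id; μ] :=
  (variance_eq_integral aemeasurable_id).symm

lemma mStd_map {Ω : Type*} [MeasurableSpace Ω] {γ : Measure Ω} {X : Ω → ℝ}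
    (hX : AEMeasurable X γ) : mStd (γ.map X) = √Var[X; γ] := by
  rw [mStd, mVar_eq_variance_id, variance_id_map hX]

lemma le_wassersteinDist_of_forall_coupling {E : Type*} [NormedAddCommGroup E]
    [MeasurableSpace E] {p a : ℝ} {μ ν : Measure E} [IsProbabilityMeasure μ]
    [IsProbabilityMeasure ν]
    (h : ∀ γ : Measure (E × E), γ.map Prod.fst = μ → γ.map Prod.snd = ν →
      a ≤ (∫ q, ‖q.1 - q.2‖ ^ p ∂γ) ^ (1 / p)) :
    a ≤ wassersteinDist p μ ν := by
  refine le_csInf ⟨_, μ.prod ν, by simp, by simp, rfl⟩ ?_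
  rintro w ⟨γ, hγμ, hγν, rfl⟩
  exact h γ hγμ hγν

theorem abs_mStd_sub_mStd_le_wassersteinDist_two (μ ν : Measure ℝ) [IsProbabilityMeasure μ]
    [IsProbabilityMeasure ν] (hμ : Integrable (fun x => x ^ 2) μ)
    (hν : Integrable (fun x => x ^ 2) ν) :
    |mStd μ - mStd ν| ≤ wassersteinDist 2 μ ν := by
  refine le_wassersteinDist_of_forall_coupling fun γ hγμ hγν => ?_
  subst hγμ hγν
  have : IsProbabilityMeasure γ := Measure.isProbabilityMeasure_of_map Prod.fst
  have memLp_of_map {X : ℝ × ℝ → ℝ} (hX : Measurable X)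
      (h : Integrable (fun x => x ^ 2) (γ.map X)) : MemLp X 2 γ :=
    ((memLp_two_iff_integrable_sq aestronglyMeasurable_id).2 h).comp_of_map hX.aemeasurable
  have hfst := memLp_of_map measurable_fst hμ
  have hsnd := memLp_of_map measurable_snd hν
  rw [mStd_map measurable_fst.aemeasurable, mStd_map measurable_snd.aemeasurable]
  calc _ ≤ √Var[Prod.fst - Prod.snd; γ] := abs_sqrt_variance_sub_le hfst hsnd
    _ ≤ √(∫ q, (q.1 - q.2) ^ 2 ∂γ) :=
        sqrt_le_sqrt (variance_le_expectation_sq (hfst.sub hsnd).aestronglyMeasurable)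
    _ = (∫ q, ‖q.1 - q.2‖ ^ (2 : ℝ) ∂γ) ^ (1 / (2 : ℝ)) := by
        simp only [norm_eq_abs, rpow_two, sq_abs, sqrt_eq_rpow]

theorem stmt6 (μ ν : Measure ℝ) [IsProbabilityMeasure μ] [IsProbabilityMeasure ν]
    (hμ : Integrable (fun x => x ^ 2) μ) (hν : Integrable (fun x => x ^ 2) ν)
    (ε : ℝ) (h : wassersteinDist 2 μ ν ≤ ε) :
    |mStd μ - mStd ν| ≤ (1 / 2) * (Real.sqrt 2 + Real.sqrt 6) * ε := by
  have hW : |mStd μ - mStd ν| ≤ ε :=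
    (abs_mStd_sub_mStd_le_wassersteinDist_two μ ν hμ hν).trans h
  have hε : 0 ≤ ε := (abs_nonneg _).trans hW
  have hc : 1 ≤ (1 / 2) * (√2 + √6) := by
    have h2 : 1 ≤ √2 := one_le_sqrt.2 (by norm_num)
    have h6 : 1 ≤ √6 := one_le_sqrt.2 (by norm_num)
    linarith
  exact hW.trans (le_mul_of_one_le_left hε hc)
end
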